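/- Let G be the subring of ℂ[[X]] consisting of power series Σ_{n≥0} a_n X^n for which there exist A, C > 0 with |a_n| ≤ A·C^n·n! for all n. Then the localization of G away from the element X (i.e., the ring G[X^{-1}]) is a field, and it is a field of fractions of G (the canonical map G → G[X^{-1}] is injective and exhibits G[X^{-1}] as Frac(G)). -/

import Mathlib

/-!
A nonzero Gevrey series is `X ^ k * u` with `u(0) ≠ 0`, and `u` is again Gevrey since
`(n + k)! ≤ 2 ^ (n + k) n! k!`. Its inverse is Gevrey as well: if `|a n| ≤ A C ^ n n!` bounds the
coefficients of `u`, those of `u⁻¹` obey `b (n + 1) = -u(0)⁻¹ ∑_{i + j = n} a (i + 1) b j`, and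
since `(i + 1)! j! ≤ (n + 1)!` an induction gives `|b n| ≤ r D ^ n n!` with `r = |u(0)⁻¹|` and
`D = C (1 + A r)`. Hence every nonzero element of `G` divides a power of `X`, so inverting `X`
already inverts every nonzero element.
-/

set_option synthInstance.maxHeartbeats 1000000

/-- The Gevrey-type growth condition defining the ring `G = k₀ = W_pt(0)` of the paper
(written in the variable `X = τ⁻¹`): `|a_n| ≤ A·C^n·n!` for some `A, C > 0`. -/
def Gevrey (f : PowerSeries ℂ) : Prop :=
  ∃ A C : ℝ, 0 < A ∧ 0 < C ∧
    ∀ n : ℕ, ‖PowerSeries.coeff n f‖ ≤ A * C ^ n * n.factorial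

open PowerSeries Finset
open scoped Nat

theorem Nat.factorial_add_le_two_pow_mul (n k : ℕ) : (n + k)! ≤ 2 ^ (n + k) * n ! * k ! := by
  rw [← Nat.add_choose_mul_factorial_mul_factorial]
  gcongr
  exact Nat.choose_le_two_pow _ _

theorem Nat.factorial_mul_factorial_le_factorial_add (i j : ℕ) : i ! * j ! ≤ (i + j)! :=
  Nat.le_of_dvd (Nat.factorial_pos _) (Nat.factorial_mul_factorial_dvd_factorial_add i j)

theorem mul_sum_antidiagonal_pow_mul_pow {R : Type*} [CommRing R] (B C : R) (n : ℕ) :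
    B * ∑ p ∈ antidiagonal n, C ^ (p.1 + 1) * (C * (1 + B)) ^ p.2 =
      (C * (1 + B)) ^ (n + 1) - C ^ (n + 1) := by
  induction n with
  | zero =>
    simp only [HasAntidiagonal.antidiagonal_zero, sum_singleton, zero_add, pow_one, pow_zero, mul_one]
    ring
  | succ n ih =>
    have hshift : ∑ p ∈ antidiagonal n, C ^ (p.1 + 1) * (C * (1 + B)) ^ (p.2 + 1) =
        C * (1 + B) * ∑ p ∈ antidiagonal n, C ^ (p.1 + 1) * (C * (1 + B)) ^ p.2 := by
      rw [mul_sum]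
      exact sum_congr rfl fun _ _ => by ring
    rw [Nat.sum_antidiagonal_succ', hshift]
    linear_combination C * (1 + B) * ih

theorem PowerSeries.coeff_succ_inv {k : Type*} [Field k] {f : k⟦X⟧} (h : constantCoeff f ≠ 0)
    (n : ℕ) : coeff (n + 1) f⁻¹ =
      -(constantCoeff f)⁻¹ * ∑ p ∈ antidiagonal n, coeff (p.1 + 1) f * coeff p.2 f⁻¹ := by
  have hmul : coeff (n + 1) (f * f⁻¹) = 0 := by
    rw [PowerSeries.mul_inv_cancel f h, coeff_one, if_neg n.succ_ne_zero]
  rw [coeff_mul, Nat.sum_antidiagonal_succ, coeff_zero_eq_constantCoeff] at hmul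
  field_simp
  linear_combination hmul

theorem gevrey_zero : Gevrey 0 :=
  ⟨1, 1, one_pos, one_pos, fun n => by simp only [map_zero, norm_zero]; positivity⟩

theorem Gevrey.of_X_pow_mul {g : ℂ⟦X⟧} {k : ℕ} (h : Gevrey (X ^ k * g)) : Gevrey g := by
  obtain ⟨A, C, hA, hC, hb⟩ := h
  refine ⟨A * C ^ k * 2 ^ k * k !, 2 * C, by positivity, by positivity, fun n => ?_⟩
  calc ‖coeff n g‖ = ‖coeff (n + k) (X ^ k * g)‖ := by rw [coeff_X_pow_mul]
    _ ≤ A * C ^ (n + k) * (n + k)! := hb _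
    _ ≤ A * C ^ (n + k) * (2 ^ (n + k) * n ! * k !) := by
      gcongr
      exact_mod_cast Nat.factorial_add_le_two_pow_mul n k
    _ = A * C ^ k * 2 ^ k * k ! * (2 * C) ^ n * n ! := by ring

theorem norm_coeff_inv_le {f : ℂ⟦X⟧} (h0 : constantCoeff f ≠ 0) {A C : ℝ} (hA : 0 ≤ A)
    (hC : 0 ≤ C) (hb : ∀ n, ‖coeff n f‖ ≤ A * C ^ n * n !) (n : ℕ) :
    ‖coeff n f⁻¹‖ ≤
      ‖(constantCoeff f)⁻¹‖ * (C * (1 + A * ‖(constantCoeff f)⁻¹‖)) ^ n * n ! := by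
  set r := ‖(constantCoeff f)⁻¹‖
  set D := C * (1 + A * r)
  induction n using Nat.strong_induction_on with
  | _ n ih =>
  rcases n with _ | n
  · simp [r, coeff_zero_eq_constantCoeff]
  have hterm : ∀ p ∈ antidiagonal n, ‖coeff (p.1 + 1) f * coeff p.2 f⁻¹‖ ≤
      A * r * (n + 1)! * (C ^ (p.1 + 1) * D ^ p.2) := by
    intro p hp
    have hsum : p.1 + 1 + p.2 = n + 1 := by rw [HasAntidiagonal.mem_antidiagonal] at hp; omega
    have hfac : ((p.1 + 1)! * p.2 ! : ℝ) ≤ (n + 1)! := by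
      rw [← hsum]
      exact_mod_cast Nat.factorial_mul_factorial_le_factorial_add _ _
    calc ‖coeff (p.1 + 1) f * coeff p.2 f⁻¹‖
        ≤ (A * C ^ (p.1 + 1) * (p.1 + 1)!) * (r * D ^ p.2 * p.2 !) := by
          rw [norm_mul]
          gcongr
          exacts [hb _, ih _ (by omega)]
      _ = A * r * (C ^ (p.1 + 1) * D ^ p.2) * ((p.1 + 1)! * p.2 !) := by ring
      _ ≤ A * r * (C ^ (p.1 + 1) * D ^ p.2) * (n + 1)! := by gcongr
      _ = A * r * (n + 1)! * (C ^ (p.1 + 1) * D ^ p.2) := by ring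
  have hgeom := mul_sum_antidiagonal_pow_mul_pow (A * r) C n
  calc ‖coeff (n + 1) f⁻¹‖
      = r * ‖∑ p ∈ antidiagonal n, coeff (p.1 + 1) f * coeff p.2 f⁻¹‖ := by
        rw [coeff_succ_inv h0, norm_mul, norm_neg]
    _ ≤ r * ∑ p ∈ antidiagonal n, A * r * (n + 1)! * (C ^ (p.1 + 1) * D ^ p.2) := by
        gcongr
        exact (norm_sum_le _ _).trans (sum_le_sum hterm)
    _ = r * (n + 1)! * (D ^ (n + 1) - C ^ (n + 1)) := by
        rw [← mul_sum]
        linear_combination r * (n + 1)! * hgeom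
    _ ≤ r * D ^ (n + 1) * (n + 1)! := by
        have : 0 ≤ r * (n + 1)! * C ^ (n + 1) := by positivity
        linarith

theorem Gevrey.inv {f : ℂ⟦X⟧} (hf : Gevrey f) : Gevrey f⁻¹ := by
  by_cases h0 : constantCoeff f = 0
  · rw [PowerSeries.inv_eq_zero.mpr h0]
    exact gevrey_zero
  obtain ⟨A, C, hA, hC, hb⟩ := hf
  exact ⟨_, _, norm_pos_iff.mpr (inv_ne_zero h0), by positivity,
    norm_coeff_inv_le h0 hA.le hC.le hb⟩

theorem Gevrey.exists_mul_eq_X_pow {f : ℂ⟦X⟧} (hf : Gevrey f) (hf0 : f ≠ 0) :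
    ∃ g, Gevrey g ∧ f * g = X ^ f.order.toNat := by
  have hfu : X ^ f.order.toNat * divXPowOrder f = f := X_pow_order_mul_divXPowOrder
  have hu0 : constantCoeff (divXPowOrder f) ≠ 0 :=
    constantCoeff_divXPowOrder_eq_zero_iff.not.mpr hf0
  refine ⟨(divXPowOrder f)⁻¹, (Gevrey.of_X_pow_mul (by rwa [hfu])).inv, ?_⟩
  nth_rw 1 [← hfu]
  rw [mul_assoc, PowerSeries.mul_inv_cancel _ hu0, mul_one]

theorem isFractionRing_away_of_dvd_pow {R : Type*} [CommRing R] {x : R}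
    (hx : x ∈ nonZeroDivisors R) (h : ∀ s ∈ nonZeroDivisors R, ∃ n : ℕ, s ∣ x ^ n) :
    IsFractionRing R (Localization.Away x) :=
  IsLocalization.of_le_of_exists_dvd _ _ (Submonoid.powers_le.mpr hx) fun s hs =>
    let ⟨n, hn⟩ := h s hs
    ⟨x ^ n, Submonoid.pow_mem _ (Submonoid.mem_powers x) n, hn⟩

/-- the localization `G[X⁻¹]` of `G` away from `X` is a field, and it is a
field of fractions of `G` (the canonical map `G → G[X⁻¹]` is injective and realizes
`G[X⁻¹]` as `Frac(G)`).  Here `G` is realized as a subalgebra `S` of `ℂ[[X]]` and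
`x ∈ S` is the element `X`. -/
theorem gevrey_localization_away_X_is_fraction_field (S : Subalgebra ℂ (PowerSeries ℂ))
    (hS : (S : Set (PowerSeries ℂ)) = {f | Gevrey f})
    (x : S) (hx : (x : PowerSeries ℂ) = PowerSeries.X) :
    IsField (Localization.Away x) ∧ IsFractionRing S (Localization.Away x) := by
  have hmem : ∀ f, f ∈ S ↔ Gevrey f := fun f => Set.ext_iff.mp hS f
  have hx0 : x ≠ 0 := fun h => X_ne_zero (by rw [← hx, h, ZeroMemClass.coe_zero])
  have hdvd : ∀ s ∈ nonZeroDivisors S, ∃ n : ℕ, s ∣ x ^ n := by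
    intro s hs
    have hs0 : (s : ℂ⟦X⟧) ≠ 0 := by exact_mod_cast nonZeroDivisors.ne_zero hs
    obtain ⟨g, hg, hsg⟩ := ((hmem s).1 s.2).exists_mul_eq_X_pow hs0
    exact ⟨(s : ℂ⟦X⟧).order.toNat, ⟨g, (hmem g).2 hg⟩, Subtype.ext (by simp [hx, hsg])⟩
  have hfrac := isFractionRing_away_of_dvd_pow (mem_nonZeroDivisors_of_ne_zero hx0) hdvd
  exact ⟨(IsFractionRing.toField S).toIsField, hfrac⟩
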